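/- For the anisotropic Ising model: ⊞ is the unique global minimizer of H^A, and for every configuration σ ∉ {⊟, ⊞} there exists a configuration σ' with H^A(σ') < H^A(σ) and Φ(σ,σ') − H^A(σ) < Γ*_A; consequently the stability level V_σ = min_{η : H^A(η) < H^A(σ)} Φ(σ,η) − H^A(σ) satisfies V_σ < Γ*_A for all σ ∉ {⊟, ⊞}. -/

import Mathlib

open scoped Classical

/-- A site of the two-dimensional discrete torus of side length `L`. -/
abbrev Site (L : ℕ) := ZMod L × ZMod L

/-- A configuration, identified with its set of `(+1)`-sites. -/
abbrev Config (L : ℕ) := Finset (Site L)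

/-- The spin value (`+1` or `-1`) of a configuration at a site. -/
noncomputable def spin {L : ℕ} (σ : Config L) (x : Site L) : ℝ :=
  if x ∈ σ then 1 else -1

/-- The configuration obtained by flipping the spin at site `x`. -/
def flipSpin {L : ℕ} (σ : Config L) (x : Site L) : Config L :=
  if x ∈ σ then σ.erase x else insert x σ

/-- Two configurations are adjacent if they differ at exactly one site. -/
def Adjacent {L : ℕ} (σ σ' : Config L) : Prop := ∃ x, σ' = flipSpin σ x

/-- `γ` is a path from `σ` to `σ'`: a finite sequence of configurations starting at `σ`,
ending at `σ'`, in which consecutive configurations are adjacent. -/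
def IsPath {L : ℕ} (σ σ' : Config L) (γ : List (Config L)) : Prop :=
  γ.head? = some σ ∧ γ.getLast? = some σ' ∧ γ.Chain' Adjacent

/-- The communication height `Φ(σ,σ')` for the Hamiltonian `H`: the minimum over paths
`γ : σ → σ'` of the maximal energy along `γ`. -/
noncomputable def commHeight {L : ℕ} (H : Config L → ℝ) (σ σ' : Config L) : ℝ :=
  sInf { M | ∃ γ : List (Config L), IsPath σ σ' γ ∧ ∀ η ∈ γ, H η ≤ M }

/-- A path is optimal if its maximal energy attains the communication height. -/
def IsOptimalPath {L : ℕ} (H : Config L → ℝ) (σ σ' : Config L) (γ : List (Config L)) : Prop :=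
  IsPath σ σ' γ ∧ ∀ η ∈ γ, H η ≤ commHeight H σ σ'

/-- The all-`(-1)` configuration `⊟`. -/
def boxMinus (L : ℕ) : Config L := ∅

/-- The all-`(+1)` configuration `⊞`. -/
def boxPlus (L : ℕ) [NeZero L] : Config L := Finset.univ

/-- Two sites are nearest neighbours on the torus. -/
def SiteAdj {L : ℕ} (x y : Site L) : Prop :=
  y = x + (1, 0) ∨ y = x + (-1, 0) ∨ y = x + (0, 1) ∨ y = x + (0, -1)

/-- `x` and `y` are connected inside the set of `(+1)`-sites of `σ` by a
nearest-neighbour chain. -/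
def ConnectedIn {L : ℕ} (σ : Config L) (x y : Site L) : Prop :=
  Relation.ReflTransGen (fun u v => u ∈ σ ∧ v ∈ σ ∧ SiteAdj u v) x y

/-- The connected component of the `(+1)`-sites of `σ` containing `x`. -/
noncomputable def component {L : ℕ} (σ : Config L) (x : Site L) : Config L :=
  σ.filter fun y => ConnectedIn σ x y

/-- `σ` consists of a single (nonempty) connected component of `(+1)`-sites. -/
def IsSingleDroplet {L : ℕ} (σ : Config L) : Prop :=
  σ.Nonempty ∧ ∀ x ∈ σ, ∀ y ∈ σ, ConnectedIn σ x y

/-- Two droplets are isolated: their Euclidean distance is at least `√2`, i.e. no site of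
one is a nearest neighbour of a site of the other. -/
def Isolated {L : ℕ} (A B : Config L) : Prop :=
  ∀ x ∈ A, ∀ y ∈ B, ¬ SiteAdj x y

/-- The rectangle on the torus with lower-left corner `a`, horizontal side `l₁` and
vertical side `l₂`. -/
def rectC {L : ℕ} (a : Site L) (l₁ l₂ : ℕ) : Config L :=
  (Finset.range l₁ ×ˢ Finset.range l₂).image
    fun p => a + ((p.1 : ZMod L), (p.2 : ZMod L))

/-- The horizontal side length `P_H R(σ)` of the rectangular envelope of `σ`. -/
noncomputable def PH {L : ℕ} (σ : Config L) : ℕ :=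
  sInf { l | ∃ c : ZMod L, ∀ x ∈ σ, ∃ i < l, x.1 = c + (i : ZMod L) }

/-- The vertical side length `P_V R(σ)` of the rectangular envelope of `σ`. -/
noncomputable def PV {L : ℕ} (σ : Config L) : ℕ :=
  sInf { l | ∃ c : ZMod L, ∀ x ∈ σ, ∃ i < l, x.2 = c + (i : ZMod L) }

/-- `σ` does not wrap around the torus horizontally: some column is empty. -/
def NoWrapH {L : ℕ} (σ : Config L) : Prop := ∃ c : ZMod L, ∀ x ∈ σ, x.1 ≠ c

/-- `σ` does not wrap around the torus vertically: some row is empty. -/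
def NoWrapV {L : ℕ} (σ : Config L) : Prop := ∃ c : ZMod L, ∀ x ∈ σ, x.2 ≠ c

/-- `R` is the rectangular envelope of `σ`: the smallest rectangle on the torus
containing the `(+1)`-sites of `σ`. -/
def IsEnvelope {L : ℕ} (σ R : Config L) : Prop :=
  (∃ a l₁ l₂, R = rectC a l₁ l₂) ∧ σ ⊆ R ∧
    ∀ R' : Config L, (∃ a l₁ l₂, R' = rectC a l₁ l₂) → σ ⊆ R' → R.card ≤ R'.card

/-- The set `R(l₁, l₂) = R(l₁ × l₂) ∪ R(l₂ × l₁)` of single rectangles with side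
lengths `l₁` and `l₂`. -/
def RSet {L : ℕ} (l₁ l₂ : ℕ) (σ : Config L) : Prop :=
  (∃ a : Site L, σ = rectC a l₁ l₂) ∨ (∃ a : Site L, σ = rectC a l₂ l₁)

/-- The set `R(l−1, l)^{1pr}`: a rectangle with sides `l−1` and `l` together with one
protuberance attached to one of its longer sides. -/
def RSet1pr {L : ℕ} (l : ℕ) (σ : Config L) : Prop :=
  (∃ a : Site L, ∃ j < l,
      σ = insert (a + ((-1 : ZMod L), (j : ZMod L))) (rectC a (l - 1) l) ∨
      σ = insert (a + (((l - 1 : ℕ) : ZMod L), (j : ZMod L))) (rectC a (l - 1) l)) ∨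
  (∃ a : Site L, ∃ j < l,
      σ = insert (a + ((j : ZMod L), (-1 : ZMod L))) (rectC a l (l - 1)) ∨
      σ = insert (a + ((j : ZMod L), ((l - 1 : ℕ) : ZMod L))) (rectC a l (l - 1)))

/-- The anisotropic Ising Hamiltonian `H^A`. -/
noncomputable def HA {L : ℕ} [NeZero L] (JH JV h : ℝ) (σ : Config L) : ℝ :=
  - (JH / 2) * ∑ x : Site L, spin σ x * spin σ (x + (1, 0))
  - (JV / 2) * ∑ x : Site L, spin σ x * spin σ (x + (0, 1))
  - (h / 2) * ∑ x : Site L, spin σ x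

/-- The next-nearest-neighbour Ising Hamiltonian `H^NN`. -/
noncomputable def HNN {L : ℕ} [NeZero L] (Jt K h : ℝ) (σ : Config L) : ℝ :=
  - (Jt / 2) * ((∑ x : Site L, spin σ x * spin σ (x + (1, 0)))
      + ∑ x : Site L, spin σ x * spin σ (x + (0, 1)))
  - (K / 2) * ((∑ x : Site L, spin σ x * spin σ (x + (1, 1)))
      + ∑ x : Site L, spin σ x * spin σ (x + (1, -1)))
  - (h / 2) * ∑ x : Site L, spin σ x

/-- The octagon `Q(Dn, Dw; ℓ_ne, ℓ_nw, ℓ_sw, ℓ_se)` with lower-left corner `a`, obtained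
from the `Dn × Dw` rectangle by cutting `ℓ_a − 1` oblique bars from corner `a`. -/
def octagon {L : ℕ} (a : Site L) (Dn Dw lne lnw lsw lse : ℕ) : Config L :=
  ((Finset.range Dn ×ˢ Finset.range Dw).filter fun p =>
      lsw ≤ p.1 + p.2 + 1 ∧ lse ≤ (Dn - 1 - p.1) + p.2 + 1 ∧
      lnw ≤ p.1 + (Dw - 1 - p.2) + 1 ∧ lne ≤ (Dn - 1 - p.1) + (Dw - 1 - p.2) + 1).image
    fun p => a + ((p.1 : ZMod L), (p.2 : ZMod L))

/-- The set `Q(Dn, Dw)` of octagons with side lengths `Dn`, `Dw`, all oblique edge lengths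
equal to `l` (including rotations and translations). -/
def QSet {L : ℕ} (Dn Dw l : ℕ) (σ : Config L) : Prop :=
  (∃ a : Site L, σ = octagon a Dn Dw l l l l) ∨
  (∃ a : Site L, σ = octagon a Dw Dn l l l l)

/-- The set `Q(D − 1, D)^{1pr}`: an octagon from `Q(D − 1, D; l)` together with one
protuberance attached at the interior of one of its longest coordinate edges. -/
def Q1pr {L : ℕ} (D l : ℕ) (σ : Config L) : Prop :=
  (∃ a : Site L, ∃ j : ℕ, l ≤ j ∧ j + l + 1 ≤ D ∧
      (σ = insert (a + ((-1 : ZMod L), (j : ZMod L))) (octagon a (D - 1) D l l l l) ∨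
       σ = insert (a + (((D - 1 : ℕ) : ZMod L), (j : ZMod L))) (octagon a (D - 1) D l l l l))) ∨
  (∃ a : Site L, ∃ j : ℕ, l ≤ j ∧ j + l + 1 ≤ D ∧
      (σ = insert (a + ((j : ZMod L), (-1 : ZMod L))) (octagon a D (D - 1) l l l l) ∨
       σ = insert (a + ((j : ZMod L), ((D - 1 : ℕ) : ZMod L))) (octagon a D (D - 1) l l l l)))

/-- A stable octagon: all four coordinate edges and all four oblique edges have
length at least 2. -/
def IsStableOctagon {L : ℕ} (σ : Config L) : Prop :=
  ∃ a : Site L, ∃ Dn Dw lne lnw lsw lse : ℕ,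
    2 ≤ lne ∧ 2 ≤ lnw ∧ 2 ≤ lsw ∧ 2 ≤ lse ∧
    lne + lnw ≤ Dn ∧ lsw + lse ≤ Dn ∧ lnw + lsw ≤ Dw ∧ lne + lse ≤ Dw ∧
    σ = octagon a Dn Dw lne lnw lsw lse

/-- A rectangle that wraps around the torus. -/
def IsWrappingRect {L : ℕ} (σ : Config L) : Prop :=
  ∃ a : Site L, ∃ l₁ l₂ : ℕ, 1 ≤ l₁ ∧ l₁ ≤ L ∧ 1 ≤ l₂ ∧ l₂ ≤ L ∧ (l₁ = L ∨ l₂ = L) ∧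
    σ = rectC a l₁ l₂

/-- The Hamiltonian `H^±` of the Ising model with alternating magnetic field. -/
noncomputable def Hpm {L : ℕ} [NeZero L] (J hodd heven : ℝ) (σ : Config L) : ℝ :=
  - (J / 2) * ((∑ x : Site L, spin σ x * spin σ (x + (1, 0)))
      + ∑ x : Site L, spin σ x * spin σ (x + (0, 1)))
  + (hodd / 2) * ∑ x ∈ Finset.univ.filter (fun x : Site L => x.2.val % 2 = 1), spin σ x
  - (heven / 2) * ∑ x ∈ Finset.univ.filter (fun x : Site L => x.2.val % 2 = 0), spin σ x

/-- A stable rectangle for the alternating-field model: horizontal side `l₁ ≥ 2`,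
odd vertical side `l₂ ≥ 3`, bottom (and hence top) row in the even rows. -/
def IsStableRect {L : ℕ} (σ : Config L) : Prop :=
  ∃ a : Site L, ∃ l₁ l₂ : ℕ, 2 ≤ l₁ ∧ l₁ ≤ L ∧ 3 ≤ l₂ ∧ l₂ ≤ L ∧ Odd l₂ ∧
    a.2.val % 2 = 0 ∧ σ = rectC a l₁ l₂

/-- A configuration in `P₁` with protuberance at `p`: an `(lb−1) × lh` rectangle with
bottom and top rows in the even rows, plus a protuberance `p` attached to one of the
longer (vertical) sides in an even row. -/
def P1at {L : ℕ} (lb lh : ℕ) (σ : Config L) (p : Site L) : Prop :=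
  ∃ a : Site L, a.2.val % 2 = 0 ∧ ∃ j : ℕ, j < lh ∧ j % 2 = 0 ∧
    (p = a + ((-1 : ZMod L), (j : ZMod L)) ∨
     p = a + (((lb - 1 : ℕ) : ZMod L), (j : ZMod L))) ∧
    σ = insert p (rectC a (lb - 1) lh)

/-- The set `P₁`. -/
def P1 {L : ℕ} (lb lh : ℕ) (σ : Config L) : Prop := ∃ p : Site L, P1at lb lh σ p

/-- The set `C₁`: obtained from a configuration in `P₁` by adding a second `(+1)`-spin
in an odd row adjacent to the protuberance. -/
def C1 {L : ℕ} (lb lh : ℕ) (σ : Config L) : Prop :=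
  ∃ σ' : Config L, ∃ p : Site L, P1at lb lh σ' p ∧
    (σ = insert (p + ((0 : ZMod L), (1 : ZMod L))) σ' ∨
     σ = insert (p + ((0 : ZMod L), (-1 : ZMod L))) σ')

/-- The set `P₂`: an `lb × (lh−2)` rectangle with bottom and top rows in the even rows,
plus a vertical or horizontal bar of length 2 attached above or below. -/
def P2 {L : ℕ} (lb lh : ℕ) (σ : Config L) : Prop :=
  ∃ a : Site L, a.2.val % 2 = 0 ∧
    ((∃ i : ℕ, i < lb ∧
        σ = insert (a + ((i : ZMod L), ((lh - 2 : ℕ) : ZMod L)))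
            (insert (a + ((i : ZMod L), ((lh - 1 : ℕ) : ZMod L))) (rectC a lb (lh - 2)))) ∨
     (∃ i : ℕ, i + 2 ≤ lb ∧
        σ = insert (a + ((i : ZMod L), ((lh - 2 : ℕ) : ZMod L)))
            (insert (a + (((i + 1 : ℕ) : ZMod L), ((lh - 2 : ℕ) : ZMod L)))
              (rectC a lb (lh - 2)))) ∨
     (∃ i : ℕ, i < lb ∧
        σ = insert (a + ((i : ZMod L), (-1 : ZMod L)))
            (insert (a + ((i : ZMod L), (-2 : ZMod L))) (rectC a lb (lh - 2)))) ∨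
     (∃ i : ℕ, i + 2 ≤ lb ∧
        σ = insert (a + ((i : ZMod L), (-1 : ZMod L)))
            (insert (a + (((i + 1 : ℕ) : ZMod L), (-1 : ZMod L))) (rectC a lb (lh - 2)))))

/-- The set `C₂`: an `lb × (lh−2)` rectangle with bottom and top rows in the even rows,
plus, above or below it, a vertical bar of length 2 together with a `(+1)`-spin
adjacent to the bar in an odd row. -/
def C2 {L : ℕ} (lb lh : ℕ) (σ : Config L) : Prop :=
  ∃ a : Site L, a.2.val % 2 = 0 ∧
    ((∃ i : ℕ, i < lb ∧ ∃ s : ZMod L, (s = 1 ∨ s = -1) ∧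
        σ = insert (a + ((i : ZMod L) + s, ((lh - 2 : ℕ) : ZMod L)))
            (insert (a + ((i : ZMod L), ((lh - 2 : ℕ) : ZMod L)))
              (insert (a + ((i : ZMod L), ((lh - 1 : ℕ) : ZMod L))) (rectC a lb (lh - 2))))) ∨
     (∃ i : ℕ, i < lb ∧ ∃ s : ZMod L, (s = 1 ∨ s = -1) ∧
        σ = insert (a + ((i : ZMod L) + s, (-1 : ZMod L)))
            (insert (a + ((i : ZMod L), (-1 : ZMod L)))
              (insert (a + ((i : ZMod L), (-2 : ZMod L))) (rectC a lb (lh - 2))))))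

/-!
`⊞` makes every bond product and every spin equal to `1`, and an empty site strictly lowers
the field sum. For `σ ∉ {⊟, ⊞}` we reach a lower configuration without exceeding
`H σ + 2 J_H`, and `2 J_H < Γ*_A` because `L_V* ≥ 2` and `h (L_V* - 1) < 2 J_V`.

If a single flip lowers the energy we are done. Otherwise no empty site has an occupied left
neighbour and an occupied vertical neighbour, as filling it would gain at least `h`. Then:
* next to a full column there is an empty one; filling it bottom-up costs `2 J_V - h` once,
  then every site gains `h`, and closing the column around the torus gains `2 J_V` more;
* a full row is the same situation after transposition, which exchanges `J_H` and `J_V`;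
* otherwise `σ` has a vertical side of some length `r` with empty caps and an empty column to
  its right. If `r h > 2 J_V` we add a column along it (barrier `2 J_V - h`); if `r h < 2 J_V`
  we delete it top-down (each step costs at most `h`, the last one gains `2 J_V - h`).
-/

section Spin

variable {L : ℕ}

lemma spin_of_mem {σ : Config L} {x : Site L} (hx : x ∈ σ) : spin σ x = 1 := if_pos hx

lemma spin_of_notMem {σ : Config L} {x : Site L} (hx : x ∉ σ) : spin σ x = -1 := if_neg hx

lemma spin_le_one (σ : Config L) (x : Site L) : spin σ x ≤ 1 := by
  unfold spin; split_ifs <;> norm_num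

lemma neg_one_le_spin (σ : Config L) (x : Site L) : -1 ≤ spin σ x := by
  unfold spin; split_ifs <;> norm_num

lemma spin_insert_of_ne {σ : Config L} {x y : Site L} (hy : y ≠ x) :
    spin (insert x σ) y = spin σ y := by
  simp [spin, hy]

end Spin

section Energy

variable {L : ℕ} [NeZero L] {JH JV h : ℝ}

lemma HA_boxPlus_lt (hJH : 0 ≤ JH) (hJV : 0 ≤ JV) (hh : 0 < h) {σ : Config L}
    (hσ : σ ≠ boxPlus L) : HA JH JV h (boxPlus L) < HA JH JV h σ := by
  have hplus (x : Site L) : spin (boxPlus L) x = 1 := spin_of_mem (Finset.mem_univ x)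
  have hbond (e : Site L) :
      ∑ x, spin σ x * spin σ (x + e) ≤ ∑ x, spin (boxPlus L) x * spin (boxPlus L) (x + e) := by
    refine Finset.sum_le_sum fun x _ => ?_
    rw [hplus, hplus, one_mul]
    nlinarith [spin_le_one σ x, neg_one_le_spin σ x, spin_le_one σ (x + e),
      neg_one_le_spin σ (x + e)]
  obtain ⟨y, hy⟩ : ∃ y, y ∉ σ := by
    by_contra! hall
    exact hσ (Finset.eq_univ_iff_forall.mpr hall)
  have hfield : ∑ x, spin σ x < ∑ x, spin (boxPlus L) x :=
    Finset.sum_lt_sum (fun x _ => (hplus x).symm ▸ spin_le_one σ x)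
      ⟨y, Finset.mem_univ y, by rw [spin_of_notMem hy, hplus]; norm_num⟩
  unfold HA
  nlinarith [mul_le_mul_of_nonneg_left (hbond (1, 0)) hJH,
    mul_le_mul_of_nonneg_left (hbond (0, 1)) hJV]

lemma sum_bond_insert {σ : Config L} {x : Site L} (hx : x ∉ σ) {e : Site L} (he : e ≠ 0) :
    ∑ y, spin (insert x σ) y * spin (insert x σ) (y + e)
      = ∑ y, spin σ y * spin σ (y + e) + 2 * (spin σ (x + e) + spin σ (x - e)) := by
  have hxe : x + e ≠ x := fun h => he (by simpa using h)
  have hxe' : x - e ≠ x := fun h => he (by simpa using h)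
  rw [← sub_eq_iff_eq_add', ← Finset.sum_sub_distrib,
    ← Finset.sum_subset (Finset.subset_univ {x, x - e}), Finset.sum_pair hxe'.symm]
  · rw [sub_add_cancel, spin_insert_of_ne hxe, spin_insert_of_ne hxe',
      spin_of_mem (Finset.mem_insert_self x σ), spin_of_notMem hx]
    ring
  · intro y _ hy
    simp only [Finset.mem_insert, Finset.mem_singleton, not_or] at hy
    have hye : y + e ≠ x := fun h => hy.2 (by rw [← h, add_sub_cancel_right])
    rw [spin_insert_of_ne hy.1, spin_insert_of_ne hye, sub_self]

lemma sum_spin_insert {σ : Config L} {x : Site L} (hx : x ∉ σ) :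
    ∑ y, spin (insert x σ) y = ∑ y, spin σ y + 2 := by
  rw [← sub_eq_iff_eq_add', ← Finset.sum_sub_distrib,
    ← Finset.sum_subset (Finset.subset_univ {x}), Finset.sum_singleton,
    spin_of_mem (Finset.mem_insert_self x σ), spin_of_notMem hx]
  · norm_num
  · intro y _ hy
    rw [spin_insert_of_ne (Finset.notMem_singleton.mp hy), sub_self]

variable [Fact (1 < L)] {σ : Config L} {x : Site L}

lemma HA_insert (hx : x ∉ σ) :
    HA JH JV h (insert x σ) = HA JH JV h σ
      - JH * (spin σ (x + (1, 0)) + spin σ (x - (1, 0)))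
      - JV * (spin σ (x + (0, 1)) + spin σ (x - (0, 1))) - h := by
  unfold HA
  rw [sum_bond_insert hx (by simp), sum_bond_insert hx (by simp), sum_spin_insert hx]
  ring

lemma HA_insert_le_of_left (hJH : 0 ≤ JH) (hJV : 0 ≤ JV) (hx : x ∉ σ)
    (hl : x - (1, 0) ∈ σ) : HA JH JV h (insert x σ) ≤ HA JH JV h σ + 2 * JV - h := by
  rw [HA_insert hx, spin_of_mem hl]
  nlinarith [neg_one_le_spin σ (x + (1, 0)), neg_one_le_spin σ (x + (0, 1)),
    neg_one_le_spin σ (x - (0, 1))]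

lemma HA_insert_le_of_corner (hJH : 0 ≤ JH) (hJV : 0 ≤ JV) (hx : x ∉ σ)
    (hl : x - (1, 0) ∈ σ) (hv : x + (0, 1) ∈ σ ∨ x - (0, 1) ∈ σ) :
    HA JH JV h (insert x σ) ≤ HA JH JV h σ - h := by
  rw [HA_insert hx, spin_of_mem hl]
  have := neg_one_le_spin σ (x + (1, 0))
  rcases hv with hv | hv <;> rw [spin_of_mem hv] <;>
    nlinarith [neg_one_le_spin σ (x + (0, 1)), neg_one_le_spin σ (x - (0, 1))]

lemma HA_insert_le_of_left_of_vert (hJH : 0 ≤ JH) (hx : x ∉ σ) (hl : x - (1, 0) ∈ σ)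
    (hu : x + (0, 1) ∈ σ) (hd : x - (0, 1) ∈ σ) :
    HA JH JV h (insert x σ) ≤ HA JH JV h σ - 2 * JV - h := by
  rw [HA_insert hx, spin_of_mem hl, spin_of_mem hu, spin_of_mem hd]
  nlinarith [neg_one_le_spin σ (x + (1, 0))]

lemma HA_sub_le_HA_insert (hJH : 0 ≤ JH) (hJV : 0 ≤ JV) (hx : x ∉ σ)
    (hr : x + (1, 0) ∉ σ) (hu : x + (0, 1) ∉ σ) :
    HA JH JV h σ - h ≤ HA JH JV h (insert x σ) := by
  rw [HA_insert hx, spin_of_notMem hr, spin_of_notMem hu]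
  nlinarith [spin_le_one σ (x - (1, 0)), spin_le_one σ (x - (0, 1))]

lemma HA_add_le_HA_insert (hJH : 0 ≤ JH) (hx : x ∉ σ) (hr : x + (1, 0) ∉ σ)
    (hu : x + (0, 1) ∉ σ) (hd : x - (0, 1) ∉ σ) :
    HA JH JV h σ + 2 * JV - h ≤ HA JH JV h (insert x σ) := by
  rw [HA_insert hx, spin_of_notMem hr, spin_of_notMem hu, spin_of_notMem hd]
  nlinarith [spin_le_one σ (x - (1, 0))]

end Energy

section Paths

variable {L : ℕ} {H H' : Config L → ℝ} {M : ℝ} {σ σ' : Config L}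

def PathBelow (H : Config L → ℝ) (M : ℝ) (σ σ' : Config L) : Prop :=
  ∃ γ, IsPath σ σ' γ ∧ ∀ η ∈ γ, H η ≤ M

/-- A witness that the stability level `V_σ` is at most `c`. -/
def CanDescend (H : Config L → ℝ) (c : ℝ) (σ : Config L) : Prop :=
  ∃ σ', H σ' < H σ ∧ PathBelow H (H σ + c) σ σ'

lemma IsPath.head_mem {γ : List (Config L)} (hγ : IsPath σ σ' γ) : σ ∈ γ :=
  List.mem_of_mem_head? hγ.1

lemma PathBelow.commHeight_le (hp : PathBelow H M σ σ') : commHeight H σ σ' ≤ M :=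
  csInf_le ⟨H σ, fun _ ⟨_, hγ, hM⟩ => hM σ hγ.head_mem⟩ hp

/-- The `0` accounts for the junk value `sInf ∅ = 0` when no path exists. -/
lemma min_le_commHeight : min (H σ) 0 ≤ commHeight H σ σ' := by
  rcases Set.eq_empty_or_nonempty {M | PathBelow H M σ σ'} with hempty | hne
  · simp only [commHeight]
    rw [show {M | ∃ γ, IsPath σ σ' γ ∧ ∀ η ∈ γ, H η ≤ M} = ∅ from hempty, Real.sInf_empty]
    exact min_le_right _ _
  · exact (min_le_left _ _).trans (le_csInf hne fun _ ⟨_, hγ, hM⟩ => hM σ hγ.head_mem)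

lemma PathBelow.mono {M' : ℝ} (hp : PathBelow H M σ σ') (hM : M ≤ M') : PathBelow H M' σ σ' :=
  let ⟨γ, hγ, hle⟩ := hp
  ⟨γ, hγ, fun η hη => (hle η hη).trans hM⟩

lemma CanDescend.mono {c c' : ℝ} (hσ : CanDescend H c σ) (hc : c ≤ c') : CanDescend H c' σ :=
  let ⟨σ', hlt, hp⟩ := hσ
  ⟨σ', hlt, hp.mono (by linarith)⟩

lemma pathBelow_flipSpin (x : Site L) (hσ : H σ ≤ M) (hx : H (flipSpin σ x) ≤ M) :
    PathBelow H M σ (flipSpin σ x) :=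
  ⟨[σ, flipSpin σ x], ⟨rfl, rfl, List.isChain_pair.mpr ⟨x, rfl⟩⟩, by simp [hσ, hx]⟩

lemma pathBelow_of_chain (g : ℕ → Config L) (n : ℕ)
    (hadj : ∀ s < n, Adjacent (g s) (g (s + 1))) (hM : ∀ s ≤ n, H (g s) ≤ M) :
    PathBelow H M (g 0) (g n) := by
  refine ⟨(List.range (n + 1)).map g, ⟨?_, ?_, ?_⟩, ?_⟩
  · simp [List.range_succ_eq_map]
  · simp [List.range_succ]
  · exact List.isChain_map_of_isChain g (fun _ _ h => h) ((List.isChain_range_succ _ _).mpr hadj)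
  · simp only [List.mem_map, List.mem_range, Nat.lt_succ_iff]
    rintro _ ⟨s, hs, rfl⟩
    exact hM s hs

lemma adjacent_comm : Adjacent σ σ' ↔ Adjacent σ' σ := by
  have key {τ τ' : Config L} : Adjacent τ τ' → Adjacent τ' τ := by
    rintro ⟨x, rfl⟩
    refine ⟨x, ?_⟩
    unfold flipSpin
    split_ifs <;> simp_all
  exact ⟨key, key⟩

lemma PathBelow.symm (hp : PathBelow H M σ σ') : PathBelow H M σ' σ := by
  obtain ⟨γ, ⟨h₁, h₂, h₃⟩, hM⟩ := hp
  refine ⟨γ.reverse, ⟨by simpa using h₂, by simpa using h₁, ?_⟩, by simpa using hM⟩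
  exact List.isChain_reverse.mpr (h₃.imp fun _ _ => adjacent_comm.mp)

lemma PathBelow.map (f : Config L → Config L) (hf : ∀ τ τ', Adjacent τ τ' → Adjacent (f τ) (f τ'))
    (hH : ∀ τ, H' (f τ) = H τ) (hp : PathBelow H M σ σ') : PathBelow H' M (f σ) (f σ') := by
  obtain ⟨γ, ⟨h₁, h₂, h₃⟩, hM⟩ := hp
  refine ⟨γ.map f, ⟨by simp [h₁], by simp [h₂], List.isChain_map_of_isChain f hf h₃⟩, ?_⟩
  simpa [hH] using hM

lemma le_add_mul_of_succ_le {f : ℕ → ℝ} {c : ℝ} {m n : ℕ} (hmn : m ≤ n)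
    (hf : ∀ t, m ≤ t → t < n → f (t + 1) ≤ f t + c) : f n ≤ f m + (n - m : ℝ) * c := by
  induction n, hmn using Nat.le_induction with
  | base => simp
  | succ n hmn ih =>
    have := hf n hmn (by omega)
    have := ih fun t h₁ h₂ => hf t h₁ (by omega)
    push_cast
    linarith

end Paths

section Transpose

variable {L : ℕ}

def transposeConfig (σ : Config L) : Config L :=
  σ.map (Equiv.prodComm (ZMod L) (ZMod L)).toEmbedding

lemma mem_transposeConfig {σ : Config L} {x : Site L} :
    x ∈ transposeConfig σ ↔ x.swap ∈ σ :=
  Finset.mem_map_equiv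

lemma transposeConfig_transposeConfig (σ : Config L) :
    transposeConfig (transposeConfig σ) = σ := by
  ext x; simp [mem_transposeConfig]

lemma spin_transposeConfig (σ : Config L) (x : Site L) :
    spin (transposeConfig σ) x = spin σ x.swap := by
  simp [spin, mem_transposeConfig]

lemma flipSpin_transposeConfig (σ : Config L) (x : Site L) :
    flipSpin (transposeConfig σ) x = transposeConfig (flipSpin σ x.swap) := by
  ext y
  by_cases hy : y = x <;>
    by_cases hx : x.swap ∈ σ <;> simp_all [flipSpin, mem_transposeConfig, Prod.swap_inj]

lemma adjacent_transposeConfig {σ σ' : Config L} (hσ : Adjacent σ σ') :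
    Adjacent (transposeConfig σ) (transposeConfig σ') := by
  obtain ⟨x, rfl⟩ := hσ
  exact ⟨x.swap, by rw [flipSpin_transposeConfig, Prod.swap_swap]⟩

variable [NeZero L]

lemma HA_transposeConfig (JH JV h : ℝ) (σ : Config L) :
    HA JH JV h (transposeConfig σ) = HA JV JH h σ := by
  have hsum (e : Site L) : ∑ x, spin (transposeConfig σ) x * spin (transposeConfig σ) (x + e)
      = ∑ x, spin σ x * spin σ (x + e.swap) :=
    Fintype.sum_equiv (Equiv.prodComm _ _) _ _ fun x => by simp [spin_transposeConfig]
  unfold HA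
  rw [hsum, hsum, Fintype.sum_equiv (Equiv.prodComm _ _) _ (spin σ)
    fun x => spin_transposeConfig σ x]
  simp only [Prod.swap_prod_mk]
  ring

lemma CanDescend.of_transposeConfig {JH JV h c : ℝ} {σ : Config L}
    (hσ : CanDescend (HA JV JH h) c (transposeConfig σ)) : CanDescend (HA JH JV h) c σ := by
  obtain ⟨σ', hlt, hp⟩ := hσ
  refine ⟨transposeConfig σ', ?_, ?_⟩
  · rwa [HA_transposeConfig, ← transposeConfig_transposeConfig σ, HA_transposeConfig]
  · have := hp.map transposeConfig (fun _ _ => adjacent_transposeConfig)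
      (H' := HA JH JV h) (HA_transposeConfig JH JV h)
    rwa [transposeConfig_transposeConfig, ← HA_transposeConfig,
      transposeConfig_transposeConfig] at this

end Transpose

section Cyclic

lemma ZMod.natCast_injective_of_lt {L s t : ℕ} (hs : s < L) (ht : t < L)
    (hst : (s : ZMod L) = t) : s = t := by
  rwa [ZMod.natCast_eq_natCast_iff', Nat.mod_eq_of_lt hs, Nat.mod_eq_of_lt ht] at hst

variable {L : ℕ} [NeZero L] {P : ZMod L → Prop}

lemma ZMod.exists_and_not_succ {i j : ZMod L} (hi : P i) (hj : ¬ P j) :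
    ∃ k, P k ∧ ¬ P (k + 1) := by
  by_contra! hstep
  have hall (n : ℕ) : P (i + n) := by
    induction n with
    | zero => simpa using hi
    | succ n ih => simpa [add_assoc] using hstep _ ih
  exact hj (by simpa using hall (j - i).val)

lemma ZMod.exists_run {k : ZMod L} (hk : ¬ P k) (hk₁ : P (k + 1)) :
    ∃ r, 1 ≤ r ∧ r < L ∧ (∀ t < r, P (k + 1 + t)) ∧ ¬ P (k + 1 + r) := by
  have hend : ¬ P (k + 1 + (L - 1 : ℕ)) := by
    rwa [Nat.cast_pred (NeZero.pos L), ZMod.natCast_self, add_add_sub_cancel, add_zero]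
  have hex : ∃ r : ℕ, ¬ P (k + 1 + r) := ⟨_, hend⟩
  refine ⟨Nat.find hex, ?_, ?_, fun t ht => not_not.mp (Nat.find_min hex ht), Nat.find_spec hex⟩
  · exact Nat.one_le_iff_ne_zero.mpr fun h0 => Nat.find_spec hex (by simpa [h0] using hk₁)
  · exact (Nat.find_min' hex hend).trans_lt (Nat.sub_lt (NeZero.pos L) one_pos)

end Cyclic

section ColumnSegments

variable {L : ℕ}

def colSeg (e b : ZMod L) (n : ℕ) : Config L :=
  (Finset.range n).image fun t : ℕ => ((e, b + t) : Site L)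

variable {e b : ZMod L} {n : ℕ} {τ : Config L}

lemma colSeg_succ : colSeg e b (n + 1) = insert (e, b + n) (colSeg e b n) := by
  simp [colSeg, Finset.range_add_one, Finset.image_insert]

lemma mem_colSeg_of_lt {t : ℕ} (ht : t < n) : ((e, b + t) : Site L) ∈ colSeg e b n :=
  Finset.mem_image_of_mem _ (Finset.mem_range.mpr ht)

lemma notMem_colSeg_of_ne {e' y : ZMod L} (he : e' ≠ e) : ((e', y) : Site L) ∉ colSeg e b n := by
  simp [colSeg, Ne.symm he]

lemma notMem_colSeg {s : ℕ} (hs : s < L) (hn : n ≤ s) : ((e, b + s) : Site L) ∉ colSeg e b n := by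
  simp only [colSeg, Finset.mem_image, Finset.mem_range, Prod.mk.injEq, true_and,
    add_right_inj, not_exists, not_and]
  intro t ht hts
  have := ZMod.natCast_injective_of_lt (by omega) hs hts
  omega

lemma union_colSeg_succ :
    τ ∪ colSeg e b (n + 1) = insert (e, b + n) (τ ∪ colSeg e b n) := by
  rw [colSeg_succ, Finset.union_insert]

lemma notMem_union_colSeg (hn : n < L) (hx : ((e, b + n) : Site L) ∉ τ) :
    ((e, b + n) : Site L) ∉ τ ∪ colSeg e b n :=
  Finset.notMem_union.mpr ⟨hx, notMem_colSeg hn le_rfl⟩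

lemma pathBelow_union_colSeg {H : Config L → ℝ} {M : ℝ} {r : ℕ} (hr : r ≤ L)
    (hfree : ∀ t < r, ((e, b + t) : Site L) ∉ τ) (hM : ∀ s ≤ r, H (τ ∪ colSeg e b s) ≤ M) :
    PathBelow H M τ (τ ∪ colSeg e b r) := by
  have h := pathBelow_of_chain (fun s => τ ∪ colSeg e b s) r (fun s hs => ⟨(e, b + s), ?_⟩) hM
  · simpa [colSeg] using h
  · rw [union_colSeg_succ, flipSpin, if_neg (notMem_union_colSeg (by omega) (hfree s hs))]

lemma mk_add_one_sub_one_zero (e y : ZMod L) : ((e + 1, y) : Site L) - (1, 0) = (e, y) := by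
  simp

lemma mk_natCast_succ_sub_zero_one (e b : ZMod L) (t : ℕ) :
    ((e, b + (t + 1 : ℕ)) : Site L) - (0, 1) = (e, b + t) := by
  simp [add_sub_assoc]

end ColumnSegments

section Moves

variable {L : ℕ} [NeZero L] [Fact (1 < L)] {JH JV h : ℝ} {σ : Config L} {e b : ZMod L} {r : ℕ}

lemma HA_union_colSeg_le (hJH : 0 ≤ JH) (hJV : 0 ≤ JV) (hr : r ≤ L)
    (hsupp : ∀ t < r, ((e, b + t) : Site L) ∈ σ) (hfree : ∀ t < r, ((e + 1, b + t) : Site L) ∉ σ)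
    {s : ℕ} (hs : 1 ≤ s) (hsr : s ≤ r) :
    HA JH JV h (σ ∪ colSeg (e + 1) b s) ≤ HA JH JV h σ + 2 * JV - s * h := by
  have hx (t : ℕ) (ht : t < r) := notMem_union_colSeg (τ := σ) (hr.trans_lt' ht) (hfree t ht)
  have hl (t : ℕ) (ht : t < r) : ((e + 1, b + t) : Site L) - (1, 0) ∈ σ ∪ colSeg (e + 1) b t := by
    rw [mk_add_one_sub_one_zero]
    exact Finset.mem_union_left _ (hsupp t ht)
  have hfirst : HA JH JV h (σ ∪ colSeg (e + 1) b 1) ≤ HA JH JV h σ + 2 * JV - h := by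
    have := HA_insert_le_of_left (h := h) hJH hJV (hx 0 (by omega)) (hl 0 (by omega))
    simpa [union_colSeg_succ (n := 0), colSeg] using this
  have hlater := le_add_mul_of_succ_le (f := fun s => HA JH JV h (σ ∪ colSeg (e + 1) b s))
    (c := -h) hs (n := s) fun t ht₁ ht₂ => by
      obtain ⟨t, rfl⟩ := Nat.exists_eq_add_of_le' ht₁
      rw [union_colSeg_succ]
      refine (HA_insert_le_of_corner hJH hJV (hx _ (by omega)) (hl _ (by omega)) (Or.inr ?_)).trans
        (by linarith)
      rw [mk_natCast_succ_sub_zero_one]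
      exact Finset.mem_union_right _ (mem_colSeg_of_lt (by omega))
  push_cast at hlater
  nlinarith

lemma canDescend_grow (hJH : 0 ≤ JH) (hJV : 0 ≤ JV) (hh : 0 < h) (hr₁ : 1 ≤ r) (hr : r ≤ L)
    (hrh : 2 * JV < r * h) (hsupp : ∀ t < r, ((e, b + t) : Site L) ∈ σ)
    (hfree : ∀ t < r, ((e + 1, b + t) : Site L) ∉ σ) :
    CanDescend (HA JH JV h) (2 * JV) σ := by
  have hle {s : ℕ} (hs : 1 ≤ s) (hsr : s ≤ r) :=
    HA_union_colSeg_le (h := h) hJH hJV hr hsupp hfree hs hsr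
  refine ⟨σ ∪ colSeg (e + 1) b r, by linarith [hle hr₁ le_rfl], pathBelow_union_colSeg hr hfree ?_⟩
  intro s hsr
  rcases Nat.eq_zero_or_pos s with rfl | hs
  · simpa [colSeg] using hJV
  · nlinarith [hle hs hsr, (Nat.one_le_cast (α := ℝ)).mpr hs]

lemma canDescend_fill (hJH : 0 ≤ JH) (hJV : 0 ≤ JV) (hh : 0 < h)
    (hsupp : ∀ i, ((e, i) : Site L) ∈ σ) (hfree : ∀ i, ((e + 1, i) : Site L) ∉ σ) :
    CanDescend (HA JH JV h) (2 * JV) σ := by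
  obtain ⟨k, hk⟩ : ∃ k, L = k + 2 := Nat.exists_eq_add_of_le' (Fact.out : 1 < L)
  have hle {s : ℕ} (hs : 1 ≤ s) (hsr : s ≤ L) :=
    HA_union_colSeg_le (h := h) (b := 0) hJH hJV le_rfl (fun t _ => hsupp _)
      (fun t _ => hfree _) hs hsr
  have hx := notMem_union_colSeg (τ := σ) (e := e + 1) (b := 0) (n := k + 1) (by omega) (hfree _)
  have hwrap : HA JH JV h (σ ∪ colSeg (e + 1) 0 L)
      ≤ HA JH JV h (σ ∪ colSeg (e + 1) 0 (k + 1)) - 2 * JV - h := by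
    rw [congrArg (colSeg (e + 1) 0) hk, show k + 2 = k + 1 + 1 from rfl, union_colSeg_succ]
    refine HA_insert_le_of_left_of_vert hJH hx (by simp [hsupp]) ?_ ?_
    · have hb : ((e + 1, (0 : ZMod L) + (k + 1 : ℕ)) : Site L) + (0, 1)
          = (e + 1, (0 : ZMod L) + (0 : ℕ)) := by
        have hL0 : ((k + 2 : ℕ) : ZMod L) = 0 := hk ▸ ZMod.natCast_self L
        push_cast at hL0
        ext
        · simp
        · simp only [Prod.snd_add]
          push_cast
          linear_combination hL0
      rw [hb]
      exact Finset.mem_union_right _ (mem_colSeg_of_lt (by omega))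
    · rw [mk_natCast_succ_sub_zero_one]
      exact Finset.mem_union_right _ (mem_colSeg_of_lt (by omega))
  have hlast := hle (s := k + 1) (by omega) (by omega)
  have hL : (L : ℝ) = k + 2 := by exact_mod_cast hk
  push_cast at hlast
  refine ⟨σ ∪ colSeg (e + 1) 0 L, by nlinarith,
    pathBelow_union_colSeg le_rfl (fun t _ => hfree _) ?_⟩
  intro s hsr
  rcases Nat.eq_zero_or_pos s with rfl | hs
  · simpa [colSeg] using hJV
  · rcases hsr.lt_or_eq with hsr | rfl
    · nlinarith [hle hs hsr.le, (Nat.one_le_cast (α := ℝ)).mpr hs]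
    · nlinarith

lemma HA_le_HA_union_colSeg_add (hJH : 0 ≤ JH) (hJV : 0 ≤ JV) (hr₁ : 1 ≤ r) (hr : r < L)
    {τ : Config L} (hfree : ∀ t ≤ r, ((e, b + t) : Site L) ∉ τ)
    (hright : ∀ t < r, ((e + 1, b + t) : Site L) ∉ τ) (hbot : ((e, b - 1) : Site L) ∉ τ) :
    HA JH JV h τ ≤ HA JH JV h (τ ∪ colSeg e b r) + r * h - 2 * JV ∧
      ∀ s ≤ r, HA JH JV h (τ ∪ colSeg e b s) ≤ HA JH JV h (τ ∪ colSeg e b r) + (r - s) * h := by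
  have hx (t : ℕ) (ht : t < r) := notMem_union_colSeg (hr.trans' ht) (hfree t ht.le)
  have hright' (t : ℕ) (ht : t < r) : ((e, b + t) : Site L) + (1, 0) ∉ τ ∪ colSeg e b t := by
    simpa using Finset.notMem_union.mpr
      ⟨hright t ht, notMem_colSeg_of_ne (add_ne_left.mpr one_ne_zero)⟩
  have hup (t : ℕ) (ht : t < r) : ((e, b + t) : Site L) + (0, 1) ∉ τ ∪ colSeg e b t := by
    rw [show ((e, b + t) : Site L) + (0, 1) = (e, b + (t + 1 : ℕ)) by simp [add_assoc]]
    exact Finset.notMem_union.mpr ⟨hfree _ ht, notMem_colSeg (by omega) (by omega)⟩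
  have hdown : ((e, b + (0 : ℕ)) : Site L) - (0, 1) ∉ τ ∪ colSeg e b 0 := by
    simpa [colSeg] using hbot
  have hfirst := HA_add_le_HA_insert (h := h) (JV := JV) hJH (hx 0 hr₁) (hright' 0 hr₁)
    (hup 0 hr₁) hdown
  have hlater {s : ℕ} (hsr : s ≤ r) :=
    le_add_mul_of_succ_le (f := fun s => -HA JH JV h (τ ∪ colSeg e b s)) (c := h) hsr
      fun t _ ht => by
        rw [union_colSeg_succ]
        linarith [HA_sub_le_HA_insert (h := h) hJH hJV (hx t ht) (hright' t ht) (hup t ht)]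
  rw [← union_colSeg_succ, zero_add, show τ ∪ colSeg e b 0 = τ by simp [colSeg]] at hfirst
  refine ⟨?_, fun s hsr => by linarith [hlater hsr]⟩
  have := hlater hr₁
  push_cast at this
  linarith

/-- The path is the reverse of rebuilding the segment from the bottom up. -/
lemma canDescend_shrink (hJH : 0 ≤ JH) (hJV : 0 ≤ JV) (hh : 0 < h) (hr₁ : 1 ≤ r) (hr : r < L)
    (hrh : r * h < 2 * JV) (hrun : ∀ t < r, ((e, b + t) : Site L) ∈ σ)
    (hbot : ((e, b - 1) : Site L) ∉ σ) (htop : ((e, b + r) : Site L) ∉ σ)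
    (hright : ∀ t < r, ((e + 1, b + t) : Site L) ∉ σ) :
    CanDescend (HA JH JV h) (2 * JV) σ := by
  set τ := σ \ colSeg e b r
  have hτσ : τ ⊆ σ := Finset.sdiff_subset
  have hτ : τ ∪ colSeg e b r = σ := by
    refine Finset.sdiff_union_of_subset ?_
    simpa only [colSeg, Finset.image_subset_iff, Finset.mem_range] using hrun
  have hfree (t : ℕ) (ht : t ≤ r) : ((e, b + t) : Site L) ∉ τ := fun hmem => by
    rcases ht.lt_or_eq with ht | rfl
    · exact (Finset.mem_sdiff.mp hmem).2 (mem_colSeg_of_lt ht)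
    · exact htop (hτσ hmem)
  obtain ⟨hlast, hle⟩ := HA_le_HA_union_colSeg_add (h := h) hJH hJV hr₁ hr hfree
    (fun t ht hmem => hright t ht (hτσ hmem)) (fun hmem => hbot (hτσ hmem))
  rw [hτ] at hlast hle
  refine ⟨τ, by linarith, ?_⟩
  have hp := pathBelow_union_colSeg (H := HA JH JV h) (M := HA JH JV h σ + 2 * JV) hr.le
    (fun t ht => hfree t ht.le) fun s hsr => by nlinarith [hle s hsr, (Nat.cast_nonneg (α := ℝ) s)]
  rw [hτ] at hp
  exact hp.symm

end Moves

def IsFlipMin {L : ℕ} (H : Config L → ℝ) (σ : Config L) : Prop :=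
  ∀ x, H σ ≤ H (flipSpin σ x)

def IsRightEdge {L : ℕ} (σ : Config L) (e k : ZMod L) : Prop :=
  ((e, k) : Site L) ∈ σ ∧ ((e + 1, k) : Site L) ∉ σ

section FlipMin

variable {L : ℕ} [NeZero L] {JH JV h : ℝ} {σ : Config L}

lemma IsFlipMin.transposeConfig (hσ : IsFlipMin (HA JH JV h) σ) :
    IsFlipMin (HA JV JH h) (transposeConfig σ) := fun x => by
  rw [flipSpin_transposeConfig, HA_transposeConfig, HA_transposeConfig]
  exact hσ x.swap

lemma one_lt_of_ne_boxMinus_of_ne_boxPlus (hne : σ ≠ boxMinus L) (hU : σ ≠ boxPlus L) :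
    1 < L := by
  obtain ⟨x, hx⟩ := Finset.nonempty_iff_ne_empty.mpr hne
  obtain ⟨y, hy⟩ : ∃ y, y ∉ σ := by
    by_contra! hall
    exact hU (Finset.eq_univ_iff_forall.mpr hall)
  by_contra hL
  obtain rfl : L = 1 := by have := NeZero.ne L; omega
  exact hy (Subsingleton.elim x y ▸ hx)

variable [Fact (1 < L)] {e k : ZMod L}

lemma IsFlipMin.mem_of_corner (hσ : IsFlipMin (HA JH JV h) σ) (hJH : 0 ≤ JH) (hJV : 0 ≤ JV)
    (hh : 0 < h) {x : Site L} (hl : x - (1, 0) ∈ σ) (hv : x + (0, 1) ∈ σ ∨ x - (0, 1) ∈ σ) :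
    x ∈ σ := by
  by_contra hx
  have := hσ x
  rw [flipSpin, if_neg hx] at this
  linarith [HA_insert_le_of_corner (h := h) hJH hJV hx hl hv]

lemma IsFlipMin.notMem_of_isRightEdge_succ (hσ : IsFlipMin (HA JH JV h) σ) (hJH : 0 ≤ JH)
    (hJV : 0 ≤ JV) (hh : 0 < h) (hk : IsRightEdge σ e k) (hk₁ : ¬ IsRightEdge σ e (k + 1)) :
    ((e, k + 1) : Site L) ∉ σ := fun hmem =>
  hk.2 <| hσ.mem_of_corner hJH hJV hh (by simpa using hk.1)
    (Or.inl (by simpa using not_and_not_right.mp hk₁ hmem))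

lemma IsFlipMin.notMem_of_isRightEdge_pred (hσ : IsFlipMin (HA JH JV h) σ) (hJH : 0 ≤ JH)
    (hJV : 0 ≤ JV) (hh : 0 < h) (hk : ¬ IsRightEdge σ e k) (hk₁ : IsRightEdge σ e (k + 1)) :
    ((e, k) : Site L) ∉ σ := fun hmem =>
  hk₁.2 <| hσ.mem_of_corner hJH hJV hh (by simpa using hk₁.1)
    (Or.inr (by simpa using not_and_not_right.mp hk hmem))

lemma IsFlipMin.canDescend_of_full_col (hσ : IsFlipMin (HA JH JV h) σ) (hJH : 0 ≤ JH)
    (hJV : 0 ≤ JV) (hh : 0 < h) (hc : ∃ c, ∀ i, ((c, i) : Site L) ∈ σ) (hU : σ ≠ boxPlus L) :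
    CanDescend (HA JH JV h) (2 * JV) σ := by
  obtain ⟨c, hc⟩ := hc
  obtain ⟨d, i, hdi⟩ : ∃ d i, ((d, i) : Site L) ∉ σ := by
    by_contra! hall
    exact hU (Finset.eq_univ_iff_forall.mpr fun x => hall x.1 x.2)
  obtain ⟨e, hfull, hnext⟩ :=
    ZMod.exists_and_not_succ (P := fun c => ∀ i, ((c, i) : Site L) ∈ σ) hc fun h => hdi (h i)
  obtain ⟨j, hj⟩ := not_forall.mp hnext
  refine canDescend_fill hJH hJV hh hfull fun i hi => ?_
  obtain ⟨k, hk, hk₁⟩ :=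
    ZMod.exists_and_not_succ (P := IsRightEdge σ e) ⟨hfull j, hj⟩ fun h => h.2 hi
  exact hσ.notMem_of_isRightEdge_succ hJH hJV hh hk hk₁ (hfull _)

lemma IsFlipMin.canDescend_of_no_full_line (hσ : IsFlipMin (HA JH JV h) σ) (hJH : 0 ≤ JH)
    (hJV : 0 ≤ JV) (hh : 0 < h) (hres : ∀ n : ℕ, (n : ℝ) * h ≠ 2 * JV) (hne : σ ≠ boxMinus L)
    (hrow : ∀ c, ∃ i, ((i, c) : Site L) ∉ σ) (hcol : ∀ c, ∃ i, ((c, i) : Site L) ∉ σ) :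
    CanDescend (HA JH JV h) (2 * JV) σ := by
  obtain ⟨x, hx⟩ := Finset.nonempty_iff_ne_empty.mpr hne
  obtain ⟨i, hi⟩ := hrow x.2
  obtain ⟨e, hy, hy₁⟩ :=
    ZMod.exists_and_not_succ (P := fun c => ((c, x.2) : Site L) ∈ σ) hx hi
  obtain ⟨z, hz⟩ := hcol e
  obtain ⟨k, hk, hk₁⟩ := ZMod.exists_and_not_succ (P := fun k => ¬ IsRightEdge σ e k)
    (fun h => hz h.1) (not_not.mpr ⟨hy, hy₁⟩)
  rw [not_not] at hk₁
  obtain ⟨r, hr₁, hr, hrun, hend⟩ := ZMod.exists_run (P := IsRightEdge σ e) hk hk₁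
  have hbot : ((e, k + 1 - 1) : Site L) ∉ σ := by
    simpa using hσ.notMem_of_isRightEdge_pred hJH hJV hh hk hk₁
  have htop : ((e, k + 1 + r) : Site L) ∉ σ := by
    obtain ⟨r, rfl⟩ := Nat.exists_eq_add_of_le' hr₁
    have := hσ.notMem_of_isRightEdge_succ hJH hJV hh (hrun r (by omega))
      (by simpa [add_assoc] using hend)
    simpa [add_assoc] using this
  rcases (hres r).lt_or_gt with hlt | hgt
  · exact canDescend_shrink hJH hJV hh hr₁ hr hlt (fun t ht => (hrun t ht).1) hbot htop
      fun t ht => (hrun t ht).2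
  · exact canDescend_grow hJH hJV hh hr₁ hr.le hgt (fun t ht => (hrun t ht).1)
      fun t ht => (hrun t ht).2

end FlipMin

theorem canDescend_HA {L : ℕ} [NeZero L] {JH JV h : ℝ} (hJV : 0 < JV) (hJHV : JV < JH)
    (hh : 0 < h) (hres : ∀ n : ℕ, (n : ℝ) * h ≠ 2 * JV) {σ : Config L} (hne : σ ≠ boxMinus L)
    (hU : σ ≠ boxPlus L) : CanDescend (HA JH JV h) (2 * JH) σ := by
  have : Fact (1 < L) := ⟨one_lt_of_ne_boxMinus_of_ne_boxPlus hne hU⟩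
  have hJH : 0 ≤ JH := by linarith
  by_cases hσ : IsFlipMin (HA JH JV h) σ
  · by_cases hcol : ∃ c, ∀ i, ((c, i) : Site L) ∈ σ
    · exact (hσ.canDescend_of_full_col hJH hJV.le hh hcol hU).mono (by linarith)
    by_cases hrow : ∃ c, ∀ i, ((i, c) : Site L) ∈ σ
    · obtain ⟨c, hc⟩ := hrow
      refine .of_transposeConfig (hσ.transposeConfig.canDescend_of_full_col hJV.le hJH hh
        ⟨c, fun i => mem_transposeConfig.mpr (hc i)⟩ fun hσU => hU ?_)
      rw [← transposeConfig_transposeConfig σ, hσU]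
      ext x
      simp [boxPlus, mem_transposeConfig]
    push Not at hcol hrow
    exact (hσ.canDescend_of_no_full_line hJH hJV.le hh hres hne hrow hcol).mono (by linarith)
  · obtain ⟨x, hx⟩ : ∃ x, HA JH JV h (flipSpin σ x) < HA JH JV h σ := by
      simpa [IsFlipMin] using hσ
    exact ⟨_, hx, pathBelow_flipSpin x (by linarith) (by linarith)⟩

lemma two_mul_JH_lt_Γ {JH JV h : ℝ} (hJHV : JV < JH) (hh0 : 0 < h) (hh : h < 2 * JV)
    {LV : ℕ} (hLV : LV = ⌈2 * JV / h⌉₊) :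
    2 * JH < 2 * (LV : ℝ) * (JH + JV) - h * (1 + ((LV : ℝ) - 1) * (LV : ℝ)) := by
  have hLV₂ : (2 : ℝ) ≤ LV := by
    have : 1 < LV := hLV ▸ Nat.lt_ceil.mpr (by rw [Nat.cast_one, lt_div_iff₀ hh0]; linarith)
    exact_mod_cast this
  have hLV₁ : h * ((LV : ℝ) - 1) < 2 * JV := by
    have := hLV ▸ Nat.ceil_lt_add_one (div_nonneg (by linarith) hh0.le : 0 ≤ 2 * JV / h)
    rw [← lt_div_iff₀' hh0]
    linarith
  nlinarith [mul_pos (by linarith : (0 : ℝ) < LV) (by linarith : 0 < 2 * JV - h * ((LV : ℝ) - 1))]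

theorem aniso_metastable_state_general (L : ℕ) [NeZero L] (JH JV h : ℝ)
    (hJHV : JV < JH) (hh0 : 0 < h) (hh : h < 2 * JV)
    (hnd : ∀ n : ℕ, (n : ℝ) ≠ 2 * JV / h)
    (LV : ℕ) (hLV : LV = ⌈2 * JV / h⌉₊) (Γ : ℝ)
    (hΓ : Γ = 2 * (LV : ℝ) * (JH + JV) - h * (1 + ((LV : ℝ) - 1) * (LV : ℝ))) :
    (∀ σ : Config L, σ ≠ boxPlus L → HA JH JV h (boxPlus L) < HA JH JV h σ) ∧
    (∀ σ : Config L, σ ≠ boxMinus L → σ ≠ boxPlus L →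
      (∃ σ' : Config L, HA JH JV h σ' < HA JH JV h σ ∧
        commHeight (HA JH JV h) σ σ' - HA JH JV h σ < Γ) ∧
      sInf {v : ℝ | ∃ η : Config L, HA JH JV h η < HA JH JV h σ ∧
        v = commHeight (HA JH JV h) σ η - HA JH JV h σ} < Γ) := by
  have hJV : 0 < JV := by linarith
  have hres (n : ℕ) : (n : ℝ) * h ≠ 2 * JV := fun hn => hnd n ((eq_div_iff hh0.ne').mpr hn)
  have hJHΓ : 2 * JH < Γ := hΓ ▸ two_mul_JH_lt_Γ hJHV hh0 hh hLV
  refine ⟨fun σ hσ => HA_boxPlus_lt (by linarith) hJV.le hh0 hσ, fun σ hne hU => ?_⟩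
  obtain ⟨σ', hlt, hp⟩ := canDescend_HA hJV hJHV hh0 hres hne hU
  have hΦ := hp.commHeight_le
  have hbdd : BddBelow {v : ℝ | ∃ η : Config L, HA JH JV h η < HA JH JV h σ ∧
      v = commHeight (HA JH JV h) σ η - HA JH JV h σ} := by
    refine ⟨min (HA JH JV h σ) 0 - HA JH JV h σ, ?_⟩
    rintro _ ⟨η, -, rfl⟩
    linarith [min_le_commHeight (H := HA JH JV h) (σ := σ) (σ' := η)]
  exact ⟨⟨σ', hlt, by linarith⟩, (csInf_le hbdd ⟨σ', hlt, rfl⟩).trans_lt (by linarith)⟩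

theorem aniso_metastable_state (L : ℕ) [NeZero L] (JH JV h : ℝ)
    (hJHV : JV < JH) (hh0 : 0 < h) (hh : h < 2 * JV)
    (hnd : ∀ n : ℕ, (n : ℝ) ≠ 2 * JV / h)
    (LV : ℕ) (hLV : LV = ⌈2 * JV / h⌉₊)
    (hL : ((L : ℝ)) ^ 2 >
      (max (2 * JH / (h * (LV : ℝ) - 2 * JV))
           (2 * JH * ((LV : ℝ) - 1) / (2 * JV - h * ((LV : ℝ) - 1)) + (LV : ℝ))) ^ 2) (Γ : ℝ)
    (hΓ : Γ = 2 * (LV : ℝ) * (JH + JV) - h * (1 + ((LV : ℝ) - 1) * (LV : ℝ))) :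
    (∀ σ : Config L, σ ≠ boxPlus L → HA JH JV h (boxPlus L) < HA JH JV h σ) ∧
    (∀ σ : Config L, σ ≠ boxMinus L → σ ≠ boxPlus L →
      (∃ σ' : Config L, HA JH JV h σ' < HA JH JV h σ ∧
        commHeight (HA JH JV h) σ σ' - HA JH JV h σ < Γ) ∧
      sInf {v : ℝ | ∃ η : Config L, HA JH JV h η < HA JH JV h σ ∧
        v = commHeight (HA JH JV h) σ η - HA JH JV h σ} < Γ) :=
  aniso_metastable_state_general L JH JV h hJHV hh0 hh hnd LV hLV Γ hΓ
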